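/- Define Ĵ_r^+(s) := (2π)^{−s}·Γ(s/2 + ir)·Γ(s/2 − ir)·cos(πs/2) and Ĵ_r^−(s) := (2π)^{−s}·Γ(s/2 + ir)·Γ(s/2 − ir)·cosh(πr). Let r ∈ ℂ with 2ir ∉ ℤ and let n be a nonnegative integer. Then lim_{s → 2(ir−n)} (s − 2(ir−n))·Ĵ_r^+(s) = (2/n!)·(2π)^{2n−2ir}·Γ(2ir − n)·cosh(πr), and lim_{s → 2(ir−n)} (s − 2(ir−n))·Ĵ_r^−(s) = ((−1)^n·2/n!)·(2π)^{2n−2ir}·Γ(2ir − n)·cosh(πr); in particular, the residue of Ĵ_r^+ at s = 2(ir − n) equals (−1)^n times the residue of Ĵ_r^− at the same point. -/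

import Mathlib

open Complex Real Filter

/-- The Mellin transform `Ĵ_r^+(s) = (2π)^{-s} Γ(s/2 + ir) Γ(s/2 − ir) cos(πs/2)`. -/
noncomputable def Jhatplus (r s : ℂ) : ℂ :=
  (2 * (π : ℂ)) ^ (-s) * Complex.Gamma (s / 2 + I * r) * Complex.Gamma (s / 2 - I * r) *
    Complex.cos ((π : ℂ) * s / 2)

/-- The Mellin transform `Ĵ_r^−(s) = (2π)^{-s} Γ(s/2 + ir) Γ(s/2 − ir) cosh(πr)`. -/
noncomputable def Jhatminus (r s : ℂ) : ℂ :=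
  (2 * (π : ℂ)) ^ (-s) * Complex.Gamma (s / 2 + I * r) * Complex.Gamma (s / 2 - I * r) *
    Complex.cosh ((π : ℂ) * r)

/-!
Near `s₀ = 2(ir − n)` only the factor `Γ(s/2 − ir)` is singular: it is the pole of `Γ` at `−n`,
whose residue `(−1)ⁿ/n!` follows from `Γ(z + 1) = z Γ(z)`, and the substitution `z = s/2 − ir`
doubles it. The remaining factors are continuous at `s₀` (`Γ(s/2 + ir)` because `2ir ∉ ℤ`), and
`cos(πs₀/2) = (−1)ⁿ cosh(πr)` produces the sign relating `Ĵ_r^+` and `Ĵ_r^−`.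
-/

open Topology Nat

theorem Complex.tendsto_add_nat_mul_Gamma_nhdsNE_neg_nat (n : ℕ) :
    Tendsto (fun z : ℂ => (z + n) * Gamma z) (𝓝[≠] (-(n : ℂ))) (𝓝 ((-1) ^ n / n !)) := by
  induction n with
  | zero => simpa using tendsto_self_mul_Gamma_nhds_zero
  | succ n ih =>
    push_cast
    have hpole : (-(n + 1 : ℂ)) ≠ 0 := neg_ne_zero.mpr (Nat.cast_add_one_ne_zero n)
    have hshift : Tendsto (· + 1) (𝓝[≠] (-(n + 1 : ℂ))) (𝓝[≠] (-(n : ℂ))) := by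
      have h := ((Homeomorph.addRight (1 : ℂ)).map_punctured_nhds_eq (-(n + 1 : ℂ))).le
      simp only [Homeomorph.coe_addRight] at h
      rwa [show -(n + 1 : ℂ) + 1 = -n by ring] at h
    have hinv : Tendsto (·⁻¹) (𝓝[≠] (-(n + 1 : ℂ))) (𝓝 (-(n + 1 : ℂ))⁻¹) :=
      (tendsto_inv₀ hpole).mono_left nhdsWithin_le_nhds
    have hrec : ∀ᶠ z in 𝓝[≠] (-(n + 1 : ℂ)),
        (z + 1 + n) * Gamma (z + 1) * z⁻¹ = (z + (n + 1)) * Gamma z := by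
      filter_upwards [eventually_ne_nhdsWithin hpole] with z hz
      rw [Gamma_add_one z hz]
      field_simp
      ring
    convert ((ih.comp hshift).mul hinv).congr' hrec using 2
    rw [pow_succ, factorial_succ]
    push_cast
    field_simp

theorem Complex.tendsto_sub_mul_Gamma_half_sub (c : ℂ) (n : ℕ) :
    Tendsto (fun s : ℂ => (s - 2 * (c - n)) * Gamma (s / 2 - c)) (𝓝[≠] (2 * (c - n)))
      (𝓝 (2 * ((-1) ^ n / n !))) := by
  have haffine : Tendsto (fun s : ℂ => s / 2 - c) (𝓝[≠] (2 * (c - n))) (𝓝[≠] (-(n : ℂ))) := by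
    have h := (((Homeomorph.mulRight₀ (2⁻¹ : ℂ) (inv_ne_zero two_ne_zero)).trans
      (Homeomorph.subRight c)).map_punctured_nhds_eq (2 * (c - n))).le
    simp only [Homeomorph.trans_apply, Homeomorph.coe_mulRight₀, Homeomorph.subRight_apply,
      ← div_eq_mul_inv] at h
    rwa [show 2 * (c - n) / 2 - c = -n by ring] at h
  refine (((tendsto_add_nat_mul_Gamma_nhdsNE_neg_nat n).comp haffine).const_mul 2).congr
    fun s => ?_
  simp only [Function.comp_apply]
  ring

theorem Complex.cos_pi_mul_I_sub_nat (r : ℂ) (n : ℕ) :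
    cos (π * (2 * (I * r - n)) / 2) = (-1) ^ n * cosh (π * r) := by
  rw [show (π : ℂ) * (2 * (I * r - n)) / 2 = π * r * I - n * π by ring,
    cos_antiperiodic.sub_nat_mul_eq, cos_mul_I]

theorem Complex.tendsto_sub_mul_cpow_neg_mul_Gamma_mul_Gamma {a c : ℂ} (ha : a ≠ 0) {n : ℕ}
    (hc : ∀ m : ℕ, 2 * c - n ≠ -m) {F : ℂ → ℂ} (hF : ContinuousAt F (2 * (c - n))) :
    Tendsto
      (fun s => (s - 2 * (c - n)) * (a ^ (-s) * Gamma (s / 2 + c) * Gamma (s / 2 - c) * F s))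
      (𝓝[≠] (2 * (c - n)))
      (𝓝 (a ^ (2 * n - 2 * c) * Gamma (2 * c - n) * F (2 * (c - n)) * (2 * ((-1) ^ n / n !)))) := by
  have hregular : ContinuousAt (fun s : ℂ => a ^ (-s) * Gamma (s / 2 + c) * F s) (2 * (c - n)) := by
    refine ContinuousAt.mul (ContinuousAt.mul ?_ ?_) hF
    · exact (continuous_neg.const_cpow (Or.inl ha)).continuousAt
    · refine ContinuousAt.comp (g := Gamma) ?_ (by fun_prop)
      rw [show 2 * (c - n) / 2 + c = 2 * c - n by ring]
      exact continuousAt_Gamma _ hc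
  convert (hregular.tendsto.mono_left nhdsWithin_le_nhds).mul
    (tendsto_sub_mul_Gamma_half_sub c n) using 1
  · funext s
    ring
  · rw [show 2 * (c - n) / 2 + c = 2 * c - n by ring, show -(2 * (c - n)) = 2 * n - 2 * c by ring]

theorem stmt_11 (r : ℂ) (hr : ∀ k : ℤ, 2 * I * r ≠ (k : ℂ)) (n : ℕ) :
    Tendsto (fun s : ℂ => (s - 2 * (I * r - (n : ℂ))) * Jhatplus r s)
      (nhdsWithin (2 * (I * r - (n : ℂ))) {2 * (I * r - (n : ℂ))}ᶜ)
      (nhds ((2 / (n.factorial : ℂ)) * (2 * (π : ℂ)) ^ ((2 * n : ℂ) - 2 * I * r) *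
        Complex.Gamma (2 * I * r - (n : ℂ)) * Complex.cosh ((π : ℂ) * r))) ∧
    Tendsto (fun s : ℂ => (s - 2 * (I * r - (n : ℂ))) * Jhatminus r s)
      (nhdsWithin (2 * (I * r - (n : ℂ))) {2 * (I * r - (n : ℂ))}ᶜ)
      (nhds (((-1) ^ n * 2 / (n.factorial : ℂ)) * (2 * (π : ℂ)) ^ ((2 * n : ℂ) - 2 * I * r) *
        Complex.Gamma (2 * I * r - (n : ℂ)) * Complex.cosh ((π : ℂ) * r))) := by
  have h2pi : (2 * (π : ℂ)) ≠ 0 := mul_ne_zero two_ne_zero (ofReal_ne_zero.mpr pi_ne_zero)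
  have hc : ∀ m : ℕ, 2 * (I * r) - n ≠ -m := fun m h =>
    hr (n - m) (by push_cast; linear_combination h)
  have hplus := tendsto_sub_mul_cpow_neg_mul_Gamma_mul_Gamma h2pi hc
    (F := fun s => cos (π * s / 2)) (by fun_prop)
  have hminus := tendsto_sub_mul_cpow_neg_mul_Gamma_mul_Gamma h2pi hc
    (continuousAt_const (y := cosh (π * r)))
  rw [cos_pi_mul_I_sub_nat] at hplus
  simp only [← mul_assoc (2 : ℂ) I r] at hplus hminus
  have hsign : ((-1 : ℂ)) ^ n * (-1) ^ n = 1 := by rw [← mul_pow]; norm_num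
  constructor
  · unfold Jhatplus
    convert hplus using 2
    linear_combination (-(2 / (n ! : ℂ)) * (2 * (π : ℂ)) ^ ((2 * n : ℂ) - 2 * I * r) *
      Gamma (2 * I * r - n) * cosh (π * r)) * hsign
  · unfold Jhatminus
    convert hminus using 2
    ring
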